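/- For any m ≥ 3 candidates at arbitrary distinct locations in a Euclidean space and any number n of voters, the Pair-Independent mechanism has distortion at most 1 + 6σ: for every action profile a and every location profile x consistent with a, E[SC(f(a), x)] ≤ (1 + 6σ)·OPT(x), where σ = d_max/d_min for the candidate set. -/

import Mathlib

open Finset

/-- Cost of a point `z` when the pair of candidates `(y k, y l)` is elected:
the distance to the closer of the two winners. -/
noncomputable def pairCost {α : Type*} [PseudoMetricSpace α] {m : ℕ}
    (y : Fin m → α) (k l : Fin m) (z : α) : ℝ :=
  min (dist z (y k)) (dist z (y l))

/-- Social cost of the pair `(y k, y l)` on the location profile `x`. -/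
noncomputable def socialCost {α : Type*} [PseudoMetricSpace α] {m n : ℕ}
    (y : Fin m → α) (k l : Fin m) (x : Fin n → α) : ℝ :=
  ∑ i, pairCost y k l (x i)

/-- Optimal social cost over all pairs of distinct candidates. -/
noncomputable def OPT {α : Type*} [PseudoMetricSpace α] {m n : ℕ}
    (y : Fin m → α) (x : Fin n → α) : ℝ :=
  sInf {c : ℝ | ∃ k l : Fin m, k ≠ l ∧ c = socialCost y k l x}

/-- A location profile `x` is consistent with an action profile `a` if every
voter votes for (one of) her nearest candidate(s). -/
def Consistent {α : Type*} [PseudoMetricSpace α] {m n : ℕ}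
    (y : Fin m → α) (a : Fin n → Fin m) (x : Fin n → α) : Prop :=
  ∀ (i : Fin n) (k : Fin m), dist (x i) (y (a i)) ≤ dist (x i) (y k)

/-- `f` is a randomized two-winner mechanism: on every action profile it gives a
probability distribution over unordered pairs of distinct candidates
(represented by a symmetric nonnegative function vanishing on the diagonal whose
values over the pairs `k < l` sum to one). -/
def IsRandMech {m n : ℕ} (f : (Fin n → Fin m) → Fin m → Fin m → ℝ) : Prop :=
  ∀ a : Fin n → Fin m, (∀ k l, 0 ≤ f a k l) ∧ (∀ k l, f a k l = f a l k) ∧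
    (∀ k, f a k k = 0) ∧
    ∑ p ∈ univ.filter (fun p : Fin m × Fin m => p.1 < p.2), f a p.1 p.2 = 1

/-- Expected cost of the point `z` under the lottery `f a`. -/
noncomputable def expCost {α : Type*} [PseudoMetricSpace α] {m n : ℕ}
    (y : Fin m → α) (f : (Fin n → Fin m) → Fin m → Fin m → ℝ)
    (a : Fin n → Fin m) (z : α) : ℝ :=
  ∑ p ∈ univ.filter (fun p : Fin m × Fin m => p.1 < p.2),
    f a p.1 p.2 * pairCost y p.1 p.2 z

/-- Expected social cost of the randomized mechanism `f` on action profile `a`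
and location profile `x`. -/
noncomputable def expSC {α : Type*} [PseudoMetricSpace α] {m n : ℕ}
    (y : Fin m → α) (f : (Fin n → Fin m) → Fin m → Fin m → ℝ)
    (a : Fin n → Fin m) (x : Fin n → α) : ℝ :=
  ∑ p ∈ univ.filter (fun p : Fin m × Fin m => p.1 < p.2),
    f a p.1 p.2 * socialCost y p.1 p.2 x

/-- Strategy-proofness of a randomized two-winner mechanism: voting for a
nearest candidate always minimizes a voter's expected cost, whatever the
other voters do. -/
def RandSP {α : Type*} [PseudoMetricSpace α] {m n : ℕ}
    (y : Fin m → α) (f : (Fin n → Fin m) → Fin m → Fin m → ℝ) : Prop :=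
  ∀ (i : Fin n) (xi : α) (a : Fin n → Fin m) (astar ai' : Fin m),
    (∀ k, dist xi (y astar) ≤ dist xi (y k)) →
    expCost y f (Function.update a i astar) xi ≤
      expCost y f (Function.update a i ai') xi

/-- Number of votes received by candidate `k` under action profile `a`. -/
def votes {m n : ℕ} (a : Fin n → Fin m) (k : Fin m) : ℕ :=
  (univ.filter fun i => a i = k).card

/-- Maximum distance between two distinct candidates. -/
noncomputable def dmaxC {α : Type*} [PseudoMetricSpace α] {m : ℕ} (y : Fin m → α) : ℝ :=
  sSup {c : ℝ | ∃ k l : Fin m, k ≠ l ∧ c = dist (y k) (y l)}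

/-- Minimum distance between two distinct candidates. -/
noncomputable def dminC {α : Type*} [PseudoMetricSpace α] {m : ℕ} (y : Fin m → α) : ℝ :=
  sInf {c : ℝ | ∃ k l : Fin m, k ≠ l ∧ c = dist (y k) (y l)}

/-- The Pair-Independent mechanism: if some candidate receives all `n` votes,
every pair containing that candidate is elected with probability `1/(m-1)`;
otherwise the pair `(k, l)` is elected with probability
`n_k/(n - n_l) + n_l/(n - n_k) - (n_k + n_l)/n`. -/
noncomputable def pairIndep (n m : ℕ) (a : Fin n → Fin m) (k l : Fin m) : ℝ :=
  if k = l then 0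
  else if votes a k = n ∨ votes a l = n then 1 / ((m : ℝ) - 1)
  else (votes a k : ℝ) / ((n : ℝ) - (votes a l : ℝ)) +
    (votes a l : ℝ) / ((n : ℝ) - (votes a k : ℝ)) -
    ((votes a k : ℝ) + (votes a l : ℝ)) / (n : ℝ)

/-!
Let `S` be the total distance of the voters to the candidates they voted for; by consistency
`S ≤ OPT`. A pair `(k, l)` costs at most `S + d_max · #B(k, l)`, where `B(k, l)` is the set of
voters who voted for neither `k` nor `l`, and consistency makes each such voter cost at least
`d_min / 2` under `(k, l)`; applied to an optimal pair `(k₀, l₀)` this gives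
`d_min / 2 · #B(k₀, l₀) ≤ OPT`. If the vote is unanimous, every elected pair contains the winner
and costs at most `S`. Otherwise the Pair-Independent probabilities sum to one and the expected
size of `B` over the lottery is at most `3 · #B(k₀, l₀)`, so the expected cost is at most
`S + 3 d_max · #B(k₀, l₀) ≤ (1 + 6σ) OPT`.
-/

section PairSums
variable {ι M : Type*} [Fintype ι] [LinearOrder ι]

theorem sum_filter_lt_add_swap [AddCommMonoid M] (G : ι → ι → M) :
    ∑ p ∈ univ.filter (fun p : ι × ι => p.1 < p.2), (G p.1 p.2 + G p.2 p.1) =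
      ∑ p ∈ (univ : Finset ι).offDiag, G p.1 p.2 := by
  have hsplit : (univ : Finset ι).offDiag =
      univ.filter (fun p : ι × ι => p.1 < p.2) ∪ univ.filter (fun p : ι × ι => p.2 < p.1) := by
    ext p; simp [lt_or_lt_iff_ne]
  rw [hsplit, sum_union (disjoint_filter.2 fun p _ h => h.asymm), sum_add_distrib]
  congr 1
  exact sum_nbij' Prod.swap Prod.swap (by simp) (by simp) (by simp) (by simp) (by simp)

theorem sum_offDiag_eq_sub [AddCommGroup M] (G : ι → ι → M) :
    ∑ p ∈ (univ : Finset ι).offDiag, G p.1 p.2 = ∑ k, ∑ l, G k l - ∑ k, G k k := by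
  rw [eq_sub_iff_add_eq, ← sum_product' univ univ G, ← diag_union_offDiag,
    sum_union (disjoint_diag_offDiag _), diag, sum_map, add_comm]
  rfl

theorem sum_filter_lt_ite_eq_or_eq [AddCommGroup M] (k₀ : ι) (c : M) :
    ∑ p ∈ univ.filter (fun p : ι × ι => p.1 < p.2), (if p.1 = k₀ ∨ p.2 = k₀ then c else 0) =
      (Fintype.card ι - 1) • c := by
  have hsplit : ∀ p ∈ univ.filter (fun p : ι × ι => p.1 < p.2),
      (if p.1 = k₀ ∨ p.2 = k₀ then c else 0) =
        (if p.1 = k₀ then c else 0) + (if p.2 = k₀ then c else 0) := by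
    intro p hp
    have hne := (mem_filter.1 hp).2.ne
    by_cases h₁ : p.1 = k₀ <;> by_cases h₂ : p.2 = k₀ <;> simp_all
  rw [sum_congr rfl hsplit, sum_filter_lt_add_swap (fun k _ => if k = k₀ then c else 0),
    sum_offDiag_eq_sub (fun k _ => if k = k₀ then c else 0)]
  simp [sub_nsmul _ (Fintype.card_pos_iff.2 ⟨k₀⟩), sub_eq_add_neg]

end PairSums

noncomputable def pairIndepWeight (n u v : ℝ) : ℝ :=
  u / (n - v) + v / (n - u) - (u + v) / n

section PairIndepWeight
variable {n u v : ℝ}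

theorem pairIndepWeight_nonneg (hu : 0 ≤ u) (hv : 0 ≤ v) (hun : u < n) (hvn : v < n) :
    0 ≤ pairIndepWeight n u v := by
  have hn : 0 < n := hu.trans_lt hun
  have hnu := sub_pos.2 hun
  have hnv := sub_pos.2 hvn
  have h : pairIndepWeight n u v = u * v / (n * (n - u)) + u * v / (n * (n - v)) := by
    unfold pairIndepWeight
    field_simp
    ring
  rw [h]
  positivity

theorem sq_sub_sq_sub_sq_sub_le (hu : 0 ≤ u) (hv : 0 ≤ v) (hun : u < n) (hvn : v < n) :
    n ^ 2 - u ^ 2 - v ^ 2 - u * v ^ 2 / (n - u) - v * u ^ 2 / (n - v) ≤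
      3 * n * (n - u - v) := by
  -- With `s = n - u - v`, the fractions are at least `u (v - s)` and `v (u - s)`, and what
  -- remains is `3 n s - 2 s² ≤ 3 n s`.
  have hu' : u * (v - (n - u - v)) ≤ u * v ^ 2 / (n - u) := by
    rw [le_div_iff₀ (sub_pos.2 hun)]
    nlinarith [mul_nonneg hu (sq_nonneg (n - u - v))]
  have hv' : v * (u - (n - u - v)) ≤ v * u ^ 2 / (n - v) := by
    rw [le_div_iff₀ (sub_pos.2 hvn)]
    nlinarith [mul_nonneg hv (sq_nonneg (n - u - v))]
  nlinarith [sq_nonneg (n - u - v)]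

variable {ι : Type*} [Fintype ι] [LinearOrder ι] {ν : ι → ℝ}

theorem sum_pairIndepWeight (hn : n ≠ 0) (hν : ∀ k, ν k ≠ n) (hsum : ∑ k, ν k = n) :
    ∑ p ∈ univ.filter (fun p : ι × ι => p.1 < p.2), pairIndepWeight n (ν p.1) (ν p.2) = 1 := by
  let g : ι → ι → ℝ := fun k l => ν l / (n - ν k) - ν l / n
  have hrow : ∀ k, ∑ l, g k l - g k k = ν k / n := by
    intro k
    have hk : n - ν k ≠ 0 := sub_ne_zero.2 (hν k).symm
    simp only [g, sum_sub_distrib, ← sum_div, hsum]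
    field_simp
    ring
  calc ∑ p ∈ univ.filter (fun p : ι × ι => p.1 < p.2), pairIndepWeight n (ν p.1) (ν p.2)
      = ∑ p ∈ univ.filter (fun p : ι × ι => p.1 < p.2), (g p.1 p.2 + g p.2 p.1) :=
        sum_congr rfl fun p _ => by simp only [pairIndepWeight, g]; ring
    _ = 1 := by
        rw [sum_filter_lt_add_swap, sum_offDiag_eq_sub, ← sum_sub_distrib, sum_congr rfl
          fun k _ => hrow k, ← sum_div, hsum, div_self hn]

theorem sum_pairIndepWeight_mul_le (hν₀ : ∀ k, 0 ≤ ν k) (hν : ∀ k, ν k < n)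
    (hsum : ∑ k, ν k = n) {k₀ l₀ : ι} (hkl : k₀ ≠ l₀) :
    ∑ p ∈ univ.filter (fun p : ι × ι => p.1 < p.2),
        pairIndepWeight n (ν p.1) (ν p.2) * (n - ν p.1 - ν p.2) ≤
      3 * (n - ν k₀ - ν l₀) := by
  -- Each term splits as `(ν k ν l - R k l) / n` plus its swap; the `ν k ν l` parts sum to
  -- `n² - ∑ ν k²`, and of the nonnegative rest only the terms of `k₀, l₀` are kept.
  have hn : 0 < n := (hν₀ k₀).trans_lt (hν k₀)
  let R : ι → ι → ℝ := fun k l => ν k * ν l ^ 2 / (n - ν k)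
  have hR : ∀ k l, 0 ≤ R k l := fun k l =>
    div_nonneg (mul_nonneg (hν₀ k) (sq_nonneg _)) (sub_pos.2 (hν k)).le
  have hoff : (k₀, l₀) ∈ (univ : Finset ι).offDiag := by simpa using hkl
  have hoff' : (l₀, k₀) ∈ (univ : Finset ι).offDiag := by simpa using hkl.symm
  have hRsum : R k₀ l₀ + R l₀ k₀ ≤ ∑ p ∈ (univ : Finset ι).offDiag, R p.1 p.2 :=
    add_le_sum (f := fun p : ι × ι => R p.1 p.2) (fun p _ => hR p.1 p.2) hoff hoff'
      fun h => hkl (congrArg Prod.fst h)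
  have hsq : ν k₀ * ν k₀ + ν l₀ * ν l₀ ≤ ∑ k, ν k * ν k :=
    add_le_sum (fun k _ => mul_self_nonneg (ν k)) (mem_univ _) (mem_univ _) hkl
  have hprod : ∑ p ∈ (univ : Finset ι).offDiag, ν p.1 * ν p.2 = n ^ 2 - ∑ k, ν k * ν k := by
    rw [sum_offDiag_eq_sub (fun k l => ν k * ν l), ← sum_mul_sum, hsum, sq]
  have hterm : ∀ u v, u < n → v < n → pairIndepWeight n u v * (n - u - v) =
      (u * v - u * v ^ 2 / (n - u)) / n + (v * u - v * u ^ 2 / (n - v)) / n := by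
    intro u v hu hv
    have := (sub_pos.2 hu).ne'
    have := (sub_pos.2 hv).ne'
    unfold pairIndepWeight
    field_simp
    ring
  rw [sum_congr rfl fun p _ => hterm _ _ (hν p.1) (hν p.2),
    sum_filter_lt_add_swap (fun k l => (ν k * ν l - R k l) / n), ← sum_div, sum_sub_distrib,
    hprod, div_le_iff₀ hn]
  nlinarith [sq_sub_sq_sub_sq_sub_le (hν₀ k₀) (hν₀ l₀) (hν k₀) (hν l₀)]

end PairIndepWeight

section Votes
variable {m n : ℕ} (a : Fin n → Fin m)

def outsiders (k l : Fin m) : Finset (Fin n) :=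
  univ.filter fun i => a i ≠ k ∧ a i ≠ l

theorem sum_votes : ∑ k, votes a k = n := by
  simpa [votes] using (card_eq_sum_card_fiberwise fun i (_ : i ∈ univ) => mem_univ (a i)).symm

theorem votes_le (k : Fin m) : votes a k ≤ n :=
  (card_filter_le _ _).trans_eq (card_fin n)

theorem votes_add_votes_add_card_outsiders {k l : Fin m} (hkl : k ≠ l) :
    votes a k + votes a l + #(outsiders a k l) = n := by
  have hdisj : Disjoint (univ.filter fun i => a i = k) (univ.filter fun i => a i = l) :=
    disjoint_filter.2 fun i _ hk hl => hkl (hk.symm.trans hl)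
  rw [votes, votes, ← card_union_of_disjoint hdisj, ← filter_or, outsiders]
  simpa only [not_or] using card_filter_add_card_filter_not (s := univ) (fun i => a i = k ∨ a i = l)
    |>.trans (card_fin n)

theorem pairIndep_of_votes_ne {k l : Fin m} (hkl : k ≠ l) (hk : votes a k ≠ n)
    (hl : votes a l ≠ n) :
    pairIndep n m a k l = pairIndepWeight n (votes a k) (votes a l) := by
  rw [pairIndep, if_neg hkl, if_neg (not_or.2 ⟨hk, hl⟩), pairIndepWeight]

theorem pairIndep_of_votes_eq (hn : 0 < n) {k₀ k l : Fin m} (hk₀ : votes a k₀ = n)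
    (hkl : k ≠ l) :
    pairIndep n m a k l = if k = k₀ ∨ l = k₀ then 1 / ((m : ℝ) - 1) else 0 := by
  have hzero : ∀ j, j ≠ k₀ → votes a j = 0 := fun j hj => by
    have := votes_add_votes_add_card_outsiders a hj
    omega
  rw [pairIndep, if_neg hkl]
  by_cases h : k = k₀ ∨ l = k₀
  · rw [if_pos h, if_pos]
    rcases h with rfl | rfl
    · exact Or.inl hk₀
    · exact Or.inr hk₀
  · rw [if_neg h, hzero k (not_or.1 h).1, hzero l (not_or.1 h).2]
    simp [hn.ne]

end Votes

section OffDiagValues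
variable {ι : Type*} [Finite ι]

theorem finite_setOf_exists_ne_eq (f : ι → ι → ℝ) :
    {c : ℝ | ∃ k l : ι, k ≠ l ∧ c = f k l}.Finite := by
  refine (Set.finite_range fun p : ι × ι => f p.1 p.2).subset ?_
  rintro c ⟨k, l, -, rfl⟩
  exact ⟨(k, l), rfl⟩

theorem exists_sInf_eq_of_ne [Nontrivial ι] (f : ι → ι → ℝ) :
    ∃ k l, k ≠ l ∧ sInf {c : ℝ | ∃ k l : ι, k ≠ l ∧ c = f k l} = f k l := by
  obtain ⟨k, l, hkl⟩ := exists_pair_ne ι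
  have hne : {c : ℝ | ∃ k l : ι, k ≠ l ∧ c = f k l}.Nonempty := ⟨f k l, k, l, hkl, rfl⟩
  exact hne.csInf_mem (finite_setOf_exists_ne_eq f)

end OffDiagValues

section Metric
variable {α : Type*} [PseudoMetricSpace α] {m n : ℕ} (y : Fin m → α)

theorem dminC_le_dist {k l : Fin m} (hkl : k ≠ l) : dminC y ≤ dist (y k) (y l) :=
  csInf_le ⟨0, by rintro c ⟨k, l, -, rfl⟩; exact dist_nonneg⟩ ⟨k, l, hkl, rfl⟩

theorem dist_le_dmaxC {k l : Fin m} (hkl : k ≠ l) : dist (y k) (y l) ≤ dmaxC y :=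
  le_csSup (finite_setOf_exists_ne_eq _).bddAbove ⟨k, l, hkl, rfl⟩

theorem exists_OPT_eq_socialCost (x : Fin n → α) (hm : 2 ≤ m) :
    ∃ k l, k ≠ l ∧ OPT y x = socialCost y k l x :=
  have := Fin.nontrivial_iff_two_le.2 hm
  exists_sInf_eq_of_ne fun k l => socialCost y k l x

end Metric

theorem dminC_pos {β : Type*} [MetricSpace β] {m : ℕ} {y : Fin m → β}
    (hy : Function.Injective y) (hm : 2 ≤ m) : 0 < dminC y := by
  have := Fin.nontrivial_iff_two_le.2 hm
  obtain ⟨k, l, hkl, h⟩ := exists_sInf_eq_of_ne fun k l => dist (y k) (y l)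
  rw [dminC, h]
  exact dist_pos.2 (hy.ne hkl)

section Costs
variable {α : Type*} [PseudoMetricSpace α] {m n : ℕ} (y : Fin m → α)

def votedCost (a : Fin n → Fin m) (x : Fin n → α) : ℝ :=
  ∑ i, dist (x i) (y (a i))

theorem pairCost_le_dist_add_dmaxC {j k : Fin m} (hjk : j ≠ k) (l : Fin m) (z : α) :
    pairCost y k l z ≤ dist z (y j) + dmaxC y :=
  calc pairCost y k l z ≤ dist z (y k) := min_le_left _ _
    _ ≤ dist z (y j) + dist (y j) (y k) := dist_triangle _ _ _
    _ ≤ dist z (y j) + dmaxC y := add_le_add_right (dist_le_dmaxC y hjk) _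

theorem half_dminC_le_pairCost {j : Fin m} {z : α} (hz : ∀ k, dist z (y j) ≤ dist z (y k))
    {k l : Fin m} (hk : j ≠ k) (hl : j ≠ l) : dminC y / 2 ≤ pairCost y k l z := by
  have hfar : ∀ k, j ≠ k → dminC y / 2 ≤ dist z (y k) := fun k hjk => by
    linarith [dminC_le_dist y hjk, dist_triangle_left (y j) (y k) z, hz k]
  exact le_min (hfar k hk) (hfar l hl)

theorem socialCost_le_votedCost_add (a : Fin n → Fin m) (x : Fin n → α) (k l : Fin m) :
    socialCost y k l x ≤ votedCost y a x + dmaxC y * #(outsiders a k l) := by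
  have hvoter : ∀ i, pairCost y k l (x i) ≤
      dist (x i) (y (a i)) + if i ∈ outsiders a k l then dmaxC y else 0 := by
    intro i
    split_ifs with h
    · exact pairCost_le_dist_add_dmaxC y (mem_filter.1 h).2.1 l (x i)
    · simp only [outsiders, mem_filter, mem_univ, true_and, not_and_or, not_not] at h
      rw [add_zero]
      rcases h with h | h
      · exact h ▸ min_le_left _ _
      · exact h ▸ min_le_right _ _
  calc socialCost y k l x
      ≤ ∑ i, (dist (x i) (y (a i)) + if i ∈ outsiders a k l then dmaxC y else 0) :=
        sum_le_sum fun i _ => hvoter i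
    _ = votedCost y a x + dmaxC y * #(outsiders a k l) := by
        rw [sum_add_distrib, sum_ite_mem, univ_inter, sum_const, nsmul_eq_mul, mul_comm]
        rfl

variable {y} {a : Fin n → Fin m} {x : Fin n → α}

theorem Consistent.votedCost_le_socialCost (h : Consistent y a x) (k l : Fin m) :
    votedCost y a x ≤ socialCost y k l x :=
  sum_le_sum fun i _ => le_min (h i k) (h i l)

theorem Consistent.half_dminC_mul_card_outsiders_le_socialCost (h : Consistent y a x)
    (k l : Fin m) : dminC y / 2 * #(outsiders a k l) ≤ socialCost y k l x :=
  calc dminC y / 2 * #(outsiders a k l) = ∑ i ∈ outsiders a k l, dminC y / 2 := by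
        rw [sum_const, nsmul_eq_mul, mul_comm]
    _ ≤ ∑ i ∈ outsiders a k l, pairCost y k l (x i) := sum_le_sum fun i hi =>
        half_dminC_le_pairCost y (h i) (mem_filter.1 hi).2.1 (mem_filter.1 hi).2.2
    _ ≤ socialCost y k l x := sum_le_sum_of_subset_of_nonneg (subset_univ _) fun i _ _ =>
        le_min dist_nonneg dist_nonneg

end Costs

section ExpectedCost
variable {α : Type*} [PseudoMetricSpace α] {m n : ℕ} (y : Fin m → α) {a : Fin n → Fin m}
  (x : Fin n → α)

theorem expSC_pairIndep_le_of_votes_eq (hm : 2 ≤ m) (hn : 0 < n) {k₀ : Fin m}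
    (hk₀ : votes a k₀ = n) : expSC y (pairIndep n m) a x ≤ votedCost y a x := by
  have hall : ∀ i, a i = k₀ := fun i => by
    simpa using card_filter_eq_iff.1 (hk₀.trans (card_fin n).symm) i (mem_univ i)
  have hm1 : (0 : ℝ) < m - 1 := by
    rw [sub_pos, Nat.one_lt_cast]
    omega
  calc expSC y (pairIndep n m) a x
      ≤ ∑ p ∈ univ.filter (fun p : Fin m × Fin m => p.1 < p.2),
          (if p.1 = k₀ ∨ p.2 = k₀ then 1 / ((m : ℝ) - 1) else 0) * votedCost y a x := by
        refine sum_le_sum fun p hp => ?_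
        rw [pairIndep_of_votes_eq a hn hk₀ (mem_filter.1 hp).2.ne]
        split_ifs with h
        · refine mul_le_mul_of_nonneg_left (sum_le_sum fun i _ => ?_) (by positivity)
          rcases h with h | h
          · exact h ▸ hall i ▸ min_le_left _ _
          · exact h ▸ hall i ▸ min_le_right _ _
        · simp
    _ = votedCost y a x := by
        rw [← sum_mul, sum_filter_lt_ite_eq_or_eq, Fintype.card_fin, nsmul_eq_mul,
          Nat.cast_pred (by omega), mul_one_div_cancel hm1.ne', one_mul]

theorem expSC_pairIndep_le (hU : ∀ k, votes a k ≠ n) {k₀ l₀ : Fin m} (hkl : k₀ ≠ l₀) :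
    expSC y (pairIndep n m) a x ≤ votedCost y a x + 3 * dmaxC y * #(outsiders a k₀ l₀) := by
  set ν : Fin m → ℝ := fun k => votes a k
  have hν₀ : ∀ k, 0 ≤ ν k := fun k => Nat.cast_nonneg _
  have hν : ∀ k, ν k < n := fun k => by
    simp only [ν]
    exact_mod_cast (votes_le a k).lt_of_ne (hU k)
  have hsum : ∑ k, ν k = n := by
    simp only [ν]
    exact_mod_cast sum_votes a
  have hcard : ∀ {k l : Fin m}, k ≠ l → (#(outsiders a k l) : ℝ) = n - ν k - ν l := by
    intro k l hkl
    have h : (votes a k + votes a l + #(outsiders a k l) : ℝ) = n := by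
      exact_mod_cast votes_add_votes_add_card_outsiders a hkl
    simp only [ν]
    rw [← h]
    ring
  have hdmax : 0 ≤ dmaxC y := dist_nonneg.trans (dist_le_dmaxC y hkl)
  set P := univ.filter (fun p : Fin m × Fin m => p.1 < p.2)
  calc expSC y (pairIndep n m) a x
      ≤ ∑ p ∈ P, pairIndepWeight n (ν p.1) (ν p.2) *
          (votedCost y a x + dmaxC y * (n - ν p.1 - ν p.2)) := by
        refine sum_le_sum fun p hp => ?_
        have hlt := (mem_filter.1 hp).2.ne
        rw [pairIndep_of_votes_ne a hlt (hU _) (hU _), ← hcard hlt]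
        exact mul_le_mul_of_nonneg_left (socialCost_le_votedCost_add y a x _ _)
          (pairIndepWeight_nonneg (hν₀ _) (hν₀ _) (hν _) (hν _))
    _ = votedCost y a x * ∑ p ∈ P, pairIndepWeight n (ν p.1) (ν p.2) +
          dmaxC y * ∑ p ∈ P, pairIndepWeight n (ν p.1) (ν p.2) * (n - ν p.1 - ν p.2) := by
        rw [mul_sum, mul_sum, ← sum_add_distrib]
        exact sum_congr rfl fun p _ => by ring
    _ ≤ votedCost y a x * 1 + dmaxC y * (3 * (n - ν k₀ - ν l₀)) := by
        rw [sum_pairIndepWeight ((hν₀ k₀).trans_lt (hν k₀)).ne' (fun k => (hν k).ne) hsum]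
        gcongr
        exact sum_pairIndepWeight_mul_le hν₀ hν hsum hkl
    _ = votedCost y a x + 3 * dmaxC y * #(outsiders a k₀ l₀) := by
        rw [hcard hkl]
        ring

end ExpectedCost

/-- For any `m ≥ 3` candidates at distinct locations in a Euclidean space, the
Pair-Independent mechanism has distortion at most `1 + 6σ`, where
`σ = d_max / d_min` for the candidate set. -/
theorem stmt11 {dim m n : ℕ} (hm : 3 ≤ m)
    (y : Fin m → EuclideanSpace ℝ (Fin dim)) (hy : Function.Injective y)
    (a : Fin n → Fin m) (x : Fin n → EuclideanSpace ℝ (Fin dim))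
    (hcons : Consistent y a x) :
    expSC y (pairIndep n m) a x ≤ (1 + 6 * (dmaxC y / dminC y)) * OPT y x := by
  obtain ⟨k₀, l₀, hkl, hOPT⟩ := exists_OPT_eq_socialCost y x (by omega)
  have hvoted : votedCost y a x ≤ OPT y x := hOPT ▸ hcons.votedCost_le_socialCost k₀ l₀
  have hdmin : 0 < dminC y := dminC_pos hy (by omega)
  have hσ : 0 ≤ dmaxC y / dminC y := div_nonneg (dist_nonneg.trans (dist_le_dmaxC y hkl)) hdmin.le
  rcases Nat.eq_zero_or_pos n with rfl | hn
  · simp [expSC, socialCost, hOPT]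
  by_cases hU : ∃ k, votes a k = n
  · obtain ⟨k, hk⟩ := hU
    calc expSC y (pairIndep n m) a x ≤ votedCost y a x :=
          expSC_pairIndep_le_of_votes_eq y x (by omega) hn hk
      _ ≤ OPT y x := hvoted
      _ ≤ (1 + 6 * (dmaxC y / dminC y)) * OPT y x :=
          le_mul_of_one_le_left ((sum_nonneg fun i _ => dist_nonneg).trans hvoted) (by linarith)
  · simp only [not_exists] at hU
    have hout := hOPT ▸ hcons.half_dminC_mul_card_outsiders_le_socialCost k₀ l₀
    calc expSC y (pairIndep n m) a x
        ≤ votedCost y a x + 3 * dmaxC y * #(outsiders a k₀ l₀) := expSC_pairIndep_le y x hU hkl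
      _ = votedCost y a x + 6 * (dmaxC y / dminC y) * (dminC y / 2 * #(outsiders a k₀ l₀)) := by
          field_simp
          ring
      _ ≤ OPT y x + 6 * (dmaxC y / dminC y) * OPT y x := by gcongr
      _ = (1 + 6 * (dmaxC y / dminC y)) * OPT y x := by ring
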